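/- For every R > ‖τ′‖_∞ the limit lim_{n→∞} 𝔫(τ,R;n)^{1/n} exists and equals inf_{n≥1} 𝔫(τ,R;n)^{1/n}; moreover this limit is independent of the choice of R > ‖τ′‖_∞, i.e. for any R₁, R₂ > ‖τ′‖_∞ one has lim_{n→∞} 𝔫(τ,R₁;n)^{1/n} = lim_{n→∞} 𝔫(τ,R₂;n)^{1/n}. In particular, if this common value 𝔫(τ) satisfies 𝔫(τ) ≥ e^ρ then 𝔫(τ,R;n) ≥ e^{ρn} for all n ≥ 1. -/

import Mathlib

noncomputable section

open Filter Set Topology MeasureTheory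

/-- The circle `ℝ/ℤ`. -/
abbrev 𝕊 : Type := UnitAddCircle

/-- The canonical representative in `[0,1)` of a point of the circle. -/
def rep (x : 𝕊) : ℝ := (AddCircle.equivIco 1 0 x : ℝ)

/-- A `C^r` expanding map of the circle of degree `ℓ`, presented by a lift `ℝ → ℝ`,
together with the expansion constants `1 < λ ≤ Λ` bounding its derivative. -/
structure ExpMap (r : ℕ) (ℓ : ℕ) : Type where
  toFun : ℝ → ℝ
  contDiff : ContDiff ℝ r toFun
  degree : ∀ x : ℝ, toFun (x + 1) = toFun x + ℓ
  lam : ℝ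
  Lam : ℝ
  one_lt_lam : 1 < lam
  lam_le_Lam : lam ≤ Lam
  lam_le_deriv : ∀ x : ℝ, lam ≤ deriv toFun x
  deriv_le_Lam : ∀ x : ℝ, deriv toFun x ≤ Lam

/-- A real-valued `C^s` function on the circle, presented by a `1`-periodic lift. -/
structure CrFun (s : ℕ∞) : Type where
  toFun : ℝ → ℝ
  contDiff : ContDiff ℝ s toFun
  periodic : ∀ x : ℝ, toFun (x + 1) = toFun x

variable {r ℓ : ℕ}

/-- The induced map on the circle. -/
def ExpMap.map (E : ExpMap r ℓ) : 𝕊 → 𝕊 := fun x => ((E.toFun (rep x) : ℝ) : 𝕊)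

/-- `(E^n)'(x)`, the derivative of the `n`-th iterate at a circle point. -/
def ExpMap.derivn (E : ExpMap r ℓ) (n : ℕ) (x : 𝕊) : ℝ := deriv (E.toFun^[n]) (rep x)

/-- `‖τ'‖_∞`, the sup-norm of the derivative of `τ`. -/
def CrFun.dsup {s : ℕ∞} (τ : CrFun s) : ℝ :=
  sSup ((fun x => |deriv τ.toFun x|) '' Set.Icc (0:ℝ) 1)

/-- The skew product `f = f_{E,τ} : 𝕋² → 𝕋²`, `f(x,s) = (E x, s + τ x)`. -/
def skew (E : ExpMap r ℓ) {s : ℕ∞} (τ : CrFun s) : 𝕊 × 𝕊 → 𝕊 × 𝕊 :=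
  fun z => (E.map z.1, z.2 + ((τ.toFun (rep z.1) : ℝ) : 𝕊))

/-- The Jacobian matrix `Df(z)`, depending only on the base coordinate. -/
def Jac1 (E : ExpMap r ℓ) {s : ℕ∞} (τ : CrFun s) (x : 𝕊) : Matrix (Fin 2) (Fin 2) ℝ :=
  !![deriv E.toFun (rep x), 0; deriv τ.toFun (rep x), 1]

/-- The Jacobian matrix `Df^n(z)` of the `n`-th iterate. -/
def Jacn (E : ExpMap r ℓ) {s : ℕ∞} (τ : CrFun s) : ℕ → 𝕊 × 𝕊 → Matrix (Fin 2) (Fin 2) ℝ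
  | 0, _ => 1
  | n+1, z => Jacn E τ n (skew E τ z) * Jac1 E τ z.1

/-- `Df^n` as a function of the base point only. -/
def JacnB (E : ExpMap r ℓ) {s : ℕ∞} (τ : CrFun s) (n : ℕ) (x : 𝕊) : Matrix (Fin 2) (Fin 2) ℝ :=
  Jacn E τ n (x, (0 : 𝕊))

/-- The cone `K_R = {(ξ,η) : |η| ≤ ϑ_R |ξ|}` with `ϑ_R = R/(λ-1)`. -/
def ExpMap.cone (E : ExpMap r ℓ) (R : ℝ) : Set (Fin 2 → ℝ) :=
  {v | |v 1| ≤ R / (E.lam - 1) * |v 0|}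

/-- A unit vector of `ℝ²`. -/
def IsUnitVec (v : Fin 2 → ℝ) : Prop := v 0 ^ 2 + v 1 ^ 2 = 1

/-- `𝔫(τ,R;n) = sup_z sup_v #{ζ ∈ f^{-n}(z) : v ∈ Df^n(ζ) K_R}`. -/
def nQ (E : ExpMap r ℓ) {s : ℕ∞} (τ : CrFun s) (R : ℝ) (n : ℕ) : ℝ :=
  sSup {c : ℝ | ∃ (z : 𝕊 × 𝕊) (v : Fin 2 → ℝ), IsUnitVec v ∧
    c = ({ζ : 𝕊 × 𝕊 | (skew E τ)^[n] ζ = z ∧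
      v ∈ (Jacn E τ n ζ).mulVec '' E.cone R}.ncard : ℝ)}

/-- `𝔫(τ) = lim_n 𝔫(τ,R;n)^{1/n}` (computed with the choice `R = ‖τ'‖_∞ + 1`). -/
def nlim (E : ExpMap r ℓ) {s : ℕ∞} (τ : CrFun s) : ℝ :=
  limUnder atTop (fun n : ℕ => nQ E τ (τ.dsup + 1) n ^ ((n : ℝ)⁻¹))

/-- The `C^r` distance between two (lifts of) functions on the circle. -/
def crDist (r : ℕ) (f g : ℝ → ℝ) : ℝ :=
  sSup {c : ℝ | ∃ i ≤ r, ∃ x ∈ Set.Icc (0:ℝ) 1, c = |iteratedDeriv i f x - iteratedDeriv i g x|}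

/-- `x_α`: the preimage point of `x` coded by the word `α = (α_n, …, α_1)`,
given the system `g` of inverse branches of `E`; here `α i` is the letter `α_{i+1}`. -/
def codePt (g : Fin ℓ → 𝕊 → 𝕊) : {n : ℕ} → (Fin n → Fin ℓ) → 𝕊 → 𝕊
  | 0, _, x => x
  | n+1, α, x => g (α (Fin.last n)) (codePt g (fun i : Fin n => α i.castSucc) x)

/-- `[α]_p`, the truncation of a word to length `p`. -/
def trunc {ℓ n : ℕ} (α : Fin n → Fin ℓ) (p : ℕ) (h : p ≤ n) : Fin p → Fin ℓ :=
  fun i => α (Fin.castLE h i)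

/-- `S_n(x;α;ψ) = Σ_{k=1}^n ψ'(x_{[α]_k}) / (E^k)'(x_{[α]_k})`. -/
def Ssum (E : ExpMap r ℓ) (g : Fin ℓ → 𝕊 → 𝕊) (ψ : ℝ → ℝ) {n : ℕ}
    (α : Fin n → Fin ℓ) (x : 𝕊) : ℝ :=
  ∑ k : Fin n, deriv ψ (rep (codePt g (trunc α (k.1+1) k.isLt) x)) /
    E.derivn (k.1+1) (codePt g (trunc α (k.1+1) k.isLt) x)

/-- `S(x;ω) = Σ_{k=1}^∞ τ'(x_{[ω]_k}) / (E^k)'(x_{[ω]_k})` for an infinite word `ω`. -/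
def Sinf (E : ExpMap r ℓ) (g : Fin ℓ → 𝕊 → 𝕊) (ψ : ℝ → ℝ) (y : 𝕊) (ω : ℕ → Fin ℓ) : ℝ :=
  ∑' k : ℕ, deriv ψ (rep (codePt g (fun i : Fin (k+1) => ω i) y)) /
    E.derivn (k+1) (codePt g (fun i : Fin (k+1) => ω i) y)

/-- Faure's counting function `Ñ_{R̃}(n)`. -/
def Ntilde (E : ExpMap r ℓ) (g : Fin ℓ → 𝕊 → 𝕊) {s : ℕ∞} (τ : CrFun s) (Rt : ℝ) (n : ℕ) : ℝ :=
  sSup {c : ℝ | ∃ (y : 𝕊) (η : ℝ),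
    c = ({α : Fin n → Fin ℓ | ∃ ω : ℕ → Fin ℓ, (∀ i : Fin n, ω i = α i) ∧
      |η - Sinf E g τ.toFun y ω| ≤ Rt * (E.derivn n (codePt g α y))⁻¹}.ncard : ℝ)}

/-- `𝐧(τ,R;n)`. -/
def nnQ (E : ExpMap r ℓ) {s : ℕ∞} (τ : CrFun s) (R : ℝ) (n : ℕ) : ℝ :=
  sSup {c : ℝ | ∃ (z : 𝕊 × 𝕊) (v : Fin 2 → ℝ), IsUnitVec v ∧
    c = ∑ᶠ ζ ∈ {ζ : 𝕊 × 𝕊 | (skew E τ)^[n] ζ = z ∧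
        v ∈ (Jacn E τ n ζ).mulVec '' E.cone R}, ((Jacn E τ n ζ).det)⁻¹}

/-- `𝐧(τ) = limsup_n 𝐧(τ,R;n)^{1/n}` (with `R = ‖τ'‖_∞ + 1`). -/
def nnlim (E : ExpMap r ℓ) {s : ℕ∞} (τ : CrFun s) : ℝ :=
  limsup (fun n : ℕ => nnQ E τ (τ.dsup + 1) n ^ ((n : ℝ)⁻¹)) atTop

/-- `𝐦(τ,R;n)`. -/
def mmQ (E : ExpMap r ℓ) {s : ℕ∞} (τ : CrFun s) (R : ℝ) (n : ℕ) : ℝ :=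
  sSup {c : ℝ | ∃ (z w : 𝕊 × 𝕊), (skew E τ)^[n] w = z ∧
    c = ∑ᶠ ζ ∈ {ζ : 𝕊 × 𝕊 | (skew E τ)^[n] ζ = z ∧
        ((Jacn E τ n ζ).mulVec '' E.cone R) ∩ ((Jacn E τ n w).mulVec '' E.cone R) = {0}},
      ((Jacn E τ n ζ).det)⁻¹}

/-- `𝐦(τ) = limsup_n 𝐦(τ,R;n)^{1/n}` (with `R = ‖τ'‖_∞ + 1`). -/
def mmlim (E : ExpMap r ℓ) {s : ℕ∞} (τ : CrFun s) : ℝ :=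
  limsup (fun n : ℕ => mmQ E τ (τ.dsup + 1) n ^ ((n : ℝ)⁻¹)) atTop

/-- `χ = lim_n (min_x (E^n)'(x))^{-1/n}`. -/
def chi (E : ExpMap r ℓ) : ℝ :=
  limUnder atTop (fun n : ℕ => (sInf (Set.range (E.derivn n))) ^ (-((n : ℝ)⁻¹)))

/-- The Gram-determinant Jacobian `Jac(M) = √(det (M Mᵀ))` of a `p × m` matrix,
which equals the modulus of the Jacobian determinant of the restriction of the
associated linear map to the orthogonal complement of its kernel when the map is
surjective, and `0` otherwise. -/
def gramJac {p m : ℕ} (M : Matrix (Fin p) (Fin m) ℝ) : ℝ :=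
  Real.sqrt (M * M.transpose).det

/-- The Jacobian of a linear map between Euclidean spaces. -/
def linJac {d e : ℕ} (L : EuclideanSpace ℝ (Fin d) →ₗ[ℝ] EuclideanSpace ℝ (Fin e)) : ℝ :=
  gramJac (LinearMap.toMatrix (EuclideanSpace.basisFun (Fin d) ℝ).toBasis
    (EuclideanSpace.basisFun (Fin e) ℝ).toBasis L)


/-!
The counts `𝔫(τ,R;n)` are submultiplicative in `n` once `R ≥ ‖τ'‖_∞`: since `Df` maps `K_R`
into itself, `f^a` sends a preimage counted for `a + b` to one counted for `b`, and the
preimages above a given point are counted for `a`, at the direction pulled back by the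
invertible matrix `Df^b`. Fekete's lemma then gives the limit and identifies it with the
infimum. For `R₁ > ‖τ'‖_∞` the cones contract towards `K_{‖τ'‖_∞}` at rate `λ⁻¹`, so some
`Df^{n₀}` maps `K_{R₂}` into `K_{R₁}` and `𝔫(τ,R₂;n₀+n) ≤ ℓ^{n₀} 𝔫(τ,R₁;n)`; hence the growth
rates for `R₁` and `R₂` coincide.
-/

section GrowthRate

variable {u v : ℕ → ℝ}

theorem iInf_rpow_inv_le (hu : ∀ n, 0 ≤ u n) {n : ℕ} (hn : n ≠ 0) :
    ⨅ k : ℕ, u (k + 1) ^ ((k : ℝ) + 1)⁻¹ ≤ u n ^ (n : ℝ)⁻¹ := by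
  obtain ⟨k, rfl⟩ := Nat.exists_eq_succ_of_ne_zero hn
  have hbdd : BddBelow (range fun k : ℕ => u (k + 1) ^ ((k : ℝ) + 1)⁻¹) :=
    ⟨0, by rintro _ ⟨k, rfl⟩; exact Real.rpow_nonneg (hu _) _⟩
  simpa using ciInf_le hbdd k

theorem pow_le_of_le_iInf_rpow_inv (hu : ∀ n, 0 ≤ u n) {c : ℝ} (hc : 0 ≤ c)
    (h : c ≤ ⨅ k : ℕ, u (k + 1) ^ ((k : ℝ) + 1)⁻¹) {n : ℕ} (hn : n ≠ 0) : c ^ n ≤ u n :=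
  calc c ^ n ≤ (u n ^ (n : ℝ)⁻¹) ^ n := pow_le_pow_left₀ hc (h.trans (iInf_rpow_inv_le hu hn)) n
    _ = u n := Real.rpow_inv_natCast_pow (hu n) hn

theorem tendsto_rpow_inv_iInf_of_submultiplicative (hu : ∀ n, 1 ≤ u n)
    (hsub : ∀ m n, u (m + n) ≤ u m * u n) :
    Tendsto (fun n : ℕ => u n ^ (n : ℝ)⁻¹) atTop (𝓝 (⨅ k : ℕ, u (k + 1) ^ ((k : ℝ) + 1)⁻¹)) := by
  have hpos : ∀ n, 0 < u n := fun n => one_pos.trans_le (hu n)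
  have hlog : Subadditive fun n => Real.log (u n) := fun m n => by
    rw [← Real.log_mul (hpos m).ne' (hpos n).ne']
    exact Real.log_le_log (hpos _) (hsub m n)
  have hbdd : BddBelow (range fun n : ℕ => Real.log (u n) / n) :=
    ⟨0, by rintro _ ⟨n, rfl⟩; exact div_nonneg (Real.log_nonneg (hu n)) n.cast_nonneg⟩
  have hexp : ∀ n : ℕ, Real.exp (Real.log (u n) / n) = u n ^ (n : ℝ)⁻¹ := fun n => by
    rw [Real.rpow_def_of_pos (hpos n), div_eq_mul_inv]
  have hlim : Tendsto (fun n : ℕ => u n ^ (n : ℝ)⁻¹) atTop (𝓝 (Real.exp hlog.lim)) :=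
    ((Real.continuous_exp.tendsto _).comp (hlog.tendsto_lim hbdd)).congr hexp
  have hle : ∀ n : ℕ, n ≠ 0 → Real.exp hlog.lim ≤ u n ^ (n : ℝ)⁻¹ := fun n hn => by
    rw [← hexp]
    exact Real.exp_le_exp.2 (hlog.lim_le_div hbdd hn)
  convert hlim using 2
  refine le_antisymm ?_ (le_ciInf fun k => by exact_mod_cast hle (k + 1) k.succ_ne_zero)
  refine ge_of_tendsto hlim ?_
  filter_upwards [eventually_ne_atTop 0] with n hn
  exact iInf_rpow_inv_le (fun n => (hpos n).le) hn

theorem le_of_tendsto_rpow_inv_of_le_mul_shift (hu : ∀ n, 0 ≤ u n) (hv : ∀ n, 1 ≤ v n)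
    {n₀ : ℕ} {C : ℝ} (hC : 0 < C) (h : ∀ n, u (n₀ + n) ≤ C * v n) {a b : ℝ}
    (ha : Tendsto (fun n : ℕ => u n ^ (n : ℝ)⁻¹) atTop (𝓝 a))
    (hb : Tendsto (fun n : ℕ => v n ^ (n : ℝ)⁻¹) atTop (𝓝 b)) : a ≤ b := by
  have ha' := (tendsto_add_atTop_iff_nat n₀).2 ha
  have hinv : Tendsto (fun n : ℕ => ((n + n₀ : ℕ) : ℝ)⁻¹) atTop (𝓝 0) :=
    tendsto_inv_atTop_zero.comp (tendsto_natCast_atTop_atTop.comp (tendsto_add_atTop_nat n₀))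
  have hbound : Tendsto (fun n : ℕ => C ^ ((n + n₀ : ℕ) : ℝ)⁻¹ * v n ^ (n : ℝ)⁻¹) atTop (𝓝 b) := by
    have hC1 := (Real.continuousAt_const_rpow hC.ne' (b := 0)).tendsto.comp hinv
    rw [Real.rpow_zero] at hC1
    simpa using hC1.mul hb
  refine le_of_tendsto_of_tendsto ha' hbound ?_
  filter_upwards [eventually_ne_atTop 0] with n hn
  have hexp : ((n + n₀ : ℕ) : ℝ)⁻¹ ≤ (n : ℝ)⁻¹ :=
    inv_anti₀ (by positivity) (by exact_mod_cast n.le_add_right n₀)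
  calc u (n + n₀) ^ ((n + n₀ : ℕ) : ℝ)⁻¹ ≤ (C * v n) ^ ((n + n₀ : ℕ) : ℝ)⁻¹ :=
        Real.rpow_le_rpow (hu _) (add_comm n n₀ ▸ h n) (by positivity)
    _ = C ^ ((n + n₀ : ℕ) : ℝ)⁻¹ * v n ^ ((n + n₀ : ℕ) : ℝ)⁻¹ :=
        Real.mul_rpow hC.le (zero_le_one.trans (hv n))
    _ ≤ C ^ ((n + n₀ : ℕ) : ℝ)⁻¹ * v n ^ (n : ℝ)⁻¹ :=
        mul_le_mul_of_nonneg_left (Real.rpow_le_rpow_of_exponent_le (hv n) hexp) (by positivity)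

end GrowthRate

section FiberCounting

theorem ncard_le_ncard_mul_of_mapsTo {α β : Type*} {s : Set α} {t : Set β} {f : α → β}
    (hs : s.Finite) (ht : t.Finite) (hf : MapsTo f s t) {B : ℝ}
    (hB : ∀ b ∈ t, (({a ∈ s | f a = b}.ncard : ℕ) : ℝ) ≤ B) : (s.ncard : ℝ) ≤ t.ncard * B := by
  classical
  obtain ⟨s, rfl⟩ := hs.exists_finset_coe
  obtain ⟨t, rfl⟩ := ht.exists_finset_coe
  simp only [ncard_coe_finset, Finset.card_eq_sum_card_fiberwise hf, Nat.cast_sum]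
  rw [← nsmul_eq_mul]
  refine Finset.sum_le_card_nsmul t _ B fun b hb => ?_
  simpa [← Finset.coe_filter] using hB b hb

theorem finite_and_ncard_iterate_preimage_le {X : Type*} {g : X → X} {k : ℕ}
    (hg : ∀ z, (g ⁻¹' {z}).Finite ∧ ((g ⁻¹' {z}).ncard : ℝ) ≤ k) (n : ℕ) (z : X) :
    (g^[n] ⁻¹' {z}).Finite ∧ ((g^[n] ⁻¹' {z}).ncard : ℝ) ≤ k ^ n := by
  induction n generalizing z with
  | zero => simp
  | succ n ih =>
    rw [Function.iterate_succ', preimage_comp]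
    have hfin : (g^[n] ⁻¹' (g ⁻¹' {z})).Finite := (hg z).1.preimage' fun w _ => (ih w).1
    refine ⟨hfin, ?_⟩
    calc ((g^[n] ⁻¹' (g ⁻¹' {z})).ncard : ℝ) ≤ (g ⁻¹' {z}).ncard * (k : ℝ) ^ n :=
          ncard_le_ncard_mul_of_mapsTo hfin (hg z).1 (fun _ h => h) fun w _ =>
            le_trans (Nat.cast_le.2 (ncard_le_ncard (sep_subset_ofPred _ _) (ih w).1)) (ih w).2
      _ ≤ k * (k : ℝ) ^ n := mul_le_mul_of_nonneg_right (hg z).2 (by positivity)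
      _ = k ^ (n + 1) := (pow_succ' _ _).symm

end FiberCounting

theorem rep_mem_Ico (x : 𝕊) : rep x ∈ Ico (0 : ℝ) 1 := by
  simpa [rep] using (AddCircle.equivIco 1 0 x).2

theorem coe_rep (x : 𝕊) : ((rep x : ℝ) : 𝕊) = x :=
  (AddCircle.equivIco 1 0).symm_apply_apply x

theorem CrFun.abs_deriv_le_dsup {s : ℕ∞} (τ : CrFun s) (hs : 1 ≤ s) (x : 𝕊) :
    |deriv τ.toFun (rep x)| ≤ τ.dsup := by
  have hcont : Continuous (deriv τ.toFun) := τ.contDiff.continuous_deriv (by exact_mod_cast hs)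
  exact le_csSup (isCompact_Icc.bddAbove_image hcont.abs.continuousOn)
    ⟨rep x, Ico_subset_Icc_self (rep_mem_Ico x), rfl⟩

namespace ExpMap

variable (E : ExpMap r ℓ)

theorem lam_pos : 0 < E.lam := zero_lt_one.trans E.one_lt_lam

theorem strictMono : StrictMono E.toFun :=
  strictMono_of_deriv_pos fun x => E.lam_pos.trans_le (E.lam_le_deriv x)

theorem degree_pos (E : ExpMap r ℓ) : 0 < ℓ := by
  have h := E.strictMono (zero_lt_one' ℝ)
  rw [show (1 : ℝ) = 0 + 1 by norm_num, E.degree 0] at h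
  exact_mod_cast (lt_add_iff_pos_right _).1 h

theorem exists_int_of_map_eq {x y : 𝕊} (h : E.map x = y) :
    ∃ m : ℤ, E.toFun (rep x) = rep y + m := by
  rw [ExpMap.map, ← coe_rep y, QuotientAddGroup.eq_iff_sub_mem] at h
  obtain ⟨m, hm⟩ := AddSubgroup.mem_zmultiples_iff.1 h
  exact ⟨m, by simp at hm; linarith⟩

/-- The lifts `E(rep x)` of the points of a fibre differ from `rep y` by distinct integers, all
in a window of length `ℓ = E(1) - E(0)`. -/
theorem finite_and_ncard_map_preimage_le (y : 𝕊) :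
    (E.map ⁻¹' {y}).Finite ∧ ((E.map ⁻¹' {y}).ncard : ℝ) ≤ ℓ := by
  set g : 𝕊 → ℤ := fun x => ⌈E.toFun (rep x) - rep y⌉
  have hg : ∀ x ∈ E.map ⁻¹' {y}, E.toFun (rep x) = rep y + g x := fun x hx => by
    obtain ⟨m, hm⟩ := E.exists_int_of_map_eq hx
    simp [g, hm]
  have hinj : InjOn g (E.map ⁻¹' {y}) := fun x hx x' hx' hxx' => by
    have := E.strictMono.injective (((hg x hx).trans (by rw [hxx'])).trans (hg x' hx').symm)
    rw [← coe_rep x, ← coe_rep x', this]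
  set m₀ : ℤ := ⌈E.toFun 0 - rep y⌉
  have hmaps : MapsTo g (E.map ⁻¹' {y}) (Finset.Ico m₀ (m₀ + ℓ) : Set ℤ) := fun x hx => by
    have hx0 := E.strictMono.monotone (rep_mem_Ico x).1
    have hx1 := E.strictMono (rep_mem_Ico x).2
    have hdeg : E.toFun 1 = E.toFun 0 + ℓ := by simpa using E.degree 0
    have hgx := hg x hx
    have hceil := Int.le_ceil (E.toFun 0 - rep y)
    simp only [Finset.coe_Ico, mem_Ico, m₀, Int.ceil_le]
    constructor
    · linarith
    · have : (g x : ℝ) < m₀ + ℓ := by linarith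
      exact_mod_cast this
  have hfin : (Finset.Ico m₀ (m₀ + ℓ) : Set ℤ).Finite := Finset.finite_toSet _
  refine ⟨Finite.of_injOn hmaps hinj hfin, ?_⟩
  have := ncard_le_ncard_of_injOn g hmaps hinj hfin
  rw [ncard_coe_finset, Int.card_Ico] at this
  exact_mod_cast this.trans (by omega)

end ExpMap

section SkewProduct

variable (E : ExpMap r ℓ) {s : ℕ∞} (τ : CrFun s)

theorem skew_preimage_singleton (z : 𝕊 × 𝕊) :
    skew E τ ⁻¹' {z} = (fun x => (x, z.2 - ((τ.toFun (rep x) : ℝ) : 𝕊))) '' (E.map ⁻¹' {z.1}) := by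
  ext ⟨x, t⟩
  simp only [mem_preimage, mem_singleton_iff, mem_image, skew, Prod.ext_iff]
  constructor
  · rintro ⟨hx, ht⟩
    exact ⟨x, hx, rfl, by rw [← ht]; abel⟩
  · rintro ⟨x, hx, rfl, rfl⟩
    exact ⟨hx, by abel⟩

theorem finite_and_ncard_skew_iterate_preimage_le (n : ℕ) (z : 𝕊 × 𝕊) :
    ((skew E τ)^[n] ⁻¹' {z}).Finite ∧ (((skew E τ)^[n] ⁻¹' {z}).ncard : ℝ) ≤ ℓ ^ n := by
  refine finite_and_ncard_iterate_preimage_le (fun z => ?_) n z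
  obtain ⟨hfin, hcard⟩ := E.finite_and_ncard_map_preimage_le z.1
  rw [skew_preimage_singleton]
  exact ⟨hfin.image _, le_trans (Nat.cast_le.2 (ncard_image_le hfin)) hcard⟩

theorem Jacn_add (a b : ℕ) (ζ : 𝕊 × 𝕊) :
    Jacn E τ (a + b) ζ = Jacn E τ b ((skew E τ)^[a] ζ) * Jacn E τ a ζ := by
  induction a generalizing ζ with
  | zero => simp [Jacn]
  | succ a ih =>
    rw [Nat.add_right_comm, Jacn, ih, Jacn, Matrix.mul_assoc, Function.iterate_succ_apply]

theorem det_Jacn_pos (n : ℕ) (ζ : 𝕊 × 𝕊) : 0 < (Jacn E τ n ζ).det := by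
  induction n generalizing ζ with
  | zero => simp [Jacn]
  | succ n ih =>
    rw [Jacn, Matrix.det_mul, Jac1, Matrix.det_fin_two_of, mul_one, zero_mul, sub_zero]
    exact mul_pos (ih _) (E.lam_pos.trans_le (E.lam_le_deriv _))

theorem isUnit_Jacn (n : ℕ) (ζ : 𝕊 × 𝕊) : IsUnit (Jacn E τ n ζ) :=
  (Matrix.isUnit_iff_isUnit_det _).2 (det_Jacn_pos E τ n ζ).ne'.isUnit

end SkewProduct

section Cones

open Matrix

/-- `E.cone R` is `slopeCone (R / (E.lam - 1))` by definition. -/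
def slopeCone (θ : ℝ) : Set (Fin 2 → ℝ) := {v | |v 1| ≤ θ * |v 0|}

theorem slopeCone_mono {θ θ' : ℝ} (h : θ ≤ θ') : slopeCone θ ⊆ slopeCone θ' :=
  fun _ hv => hv.trans (mul_le_mul_of_nonneg_right h (abs_nonneg _))

theorem smul_mem_slopeCone {θ : ℝ} (t : ℝ) {v : Fin 2 → ℝ} (hv : v ∈ slopeCone θ) :
    t • v ∈ slopeCone θ := by
  simp only [slopeCone, mem_ofPred_eq, Pi.smul_apply, smul_eq_mul, abs_mul] at hv ⊢
  nlinarith [abs_nonneg t]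

variable (E : ExpMap r ℓ) {s : ℕ∞} (τ : CrFun s) {d : ℝ}

theorem Jac1_mulVec_mem_slopeCone {x : 𝕊} (hd : |deriv τ.toFun (rep x)| ≤ d) {θ : ℝ}
    (hθ : 0 ≤ θ) {v : Fin 2 → ℝ} (hv : v ∈ slopeCone θ) :
    Jac1 E τ x *ᵥ v ∈ slopeCone ((d + θ) / E.lam) := by
  have hE := E.lam_le_deriv (rep x)
  have hd0 := (abs_nonneg _).trans hd
  have h0 : (Jac1 E τ x *ᵥ v) 0 = deriv E.toFun (rep x) * v 0 := by
    simp [Jac1, mulVec, dotProduct, Fin.sum_univ_two]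
  have h1 : (Jac1 E τ x *ᵥ v) 1 = deriv τ.toFun (rep x) * v 0 + v 1 := by
    simp [Jac1, mulVec, dotProduct, Fin.sum_univ_two]
  simp only [slopeCone, mem_ofPred_eq, h0, h1] at hv ⊢
  rw [abs_mul, abs_of_pos (E.lam_pos.trans_le hE), div_mul_eq_mul_div, le_div_iff₀ E.lam_pos]
  calc |deriv τ.toFun (rep x) * v 0 + v 1| * E.lam
      ≤ (d + θ) * |v 0| * E.lam := by
        refine mul_le_mul_of_nonneg_right ?_ E.lam_pos.le
        calc _ ≤ |deriv τ.toFun (rep x)| * |v 0| + |v 1| :=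
              (abs_add_le _ _).trans_eq (by rw [abs_mul])
          _ ≤ (d + θ) * |v 0| := by nlinarith [abs_nonneg (v 0)]
    _ ≤ (d + θ) * (deriv E.toFun (rep x) * |v 0|) := by
        rw [mul_assoc, mul_comm |v 0|]; gcongr

/-- The slopes evolve by `θ ↦ (d + θ)/λ`, which contracts towards its fixed point `d/(λ-1)`. -/
theorem Jacn_mulVec_mem_slopeCone (hd : ∀ x : 𝕊, |deriv τ.toFun (rep x)| ≤ d) (n : ℕ)
    (ζ : 𝕊 × 𝕊) {θ : ℝ} (hθ : 0 ≤ θ) {v : Fin 2 → ℝ} (hv : v ∈ slopeCone θ) :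
    Jacn E τ n ζ *ᵥ v ∈ slopeCone (d / (E.lam - 1) + (θ - d / (E.lam - 1)) / E.lam ^ n) := by
  induction n generalizing ζ θ v with
  | zero => simpa [Jacn] using hv
  | succ n ih =>
    have hd0 := (abs_nonneg _).trans (hd 0)
    rw [Jacn, ← Matrix.mulVec_mulVec]
    convert ih (skew E τ ζ) (by positivity [E.lam_pos])
      (Jac1_mulVec_mem_slopeCone E τ (hd ζ.1) hθ hv) using 2
    have h1 : E.lam - 1 ≠ 0 := (sub_pos.2 E.one_lt_lam).ne'
    have h2 := E.lam_pos.ne'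
    field_simp
    ring

theorem mapsTo_Jacn_cone (hd : ∀ x : 𝕊, |deriv τ.toFun (rep x)| ≤ d) {R R' : ℝ} (hR : 0 ≤ R)
    {n : ℕ} (hn : (R - d) / E.lam ^ n ≤ R' - d) (ζ : 𝕊 × 𝕊) :
    MapsTo (Jacn E τ n ζ *ᵥ ·) (E.cone R) (E.cone R') := by
  have hlam : 0 < E.lam - 1 := sub_pos.2 E.one_lt_lam
  refine fun v hv => slopeCone_mono ?_
    (Jacn_mulVec_mem_slopeCone E τ hd n ζ (div_nonneg hR hlam.le) hv)
  calc d / (E.lam - 1) + (R / (E.lam - 1) - d / (E.lam - 1)) / E.lam ^ n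
      = (d + (R - d) / E.lam ^ n) / (E.lam - 1) := by ring
    _ ≤ R' / (E.lam - 1) := by gcongr; linarith

theorem mapsTo_Jacn_cone_self (hd : ∀ x : 𝕊, |deriv τ.toFun (rep x)| ≤ d) {R : ℝ} (hR : d ≤ R)
    (n : ℕ) (ζ : 𝕊 × 𝕊) : MapsTo (Jacn E τ n ζ *ᵥ ·) (E.cone R) (E.cone R) :=
  mapsTo_Jacn_cone E τ hd ((abs_nonneg _).trans ((hd 0).trans hR))
    (div_le_self (sub_nonneg.2 hR) (one_le_pow₀ E.one_lt_lam.le)) ζ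

theorem exists_mapsTo_Jacn_cone (hd : ∀ x : 𝕊, |deriv τ.toFun (rep x)| ≤ d) {R₁ R₂ : ℝ}
    (hR₁ : d < R₁) (hR₂ : 0 ≤ R₂) :
    ∃ n₀ : ℕ, ∀ ζ, MapsTo (Jacn E τ n₀ ζ *ᵥ ·) (E.cone R₂) (E.cone R₁) := by
  obtain ⟨n₀, hn₀⟩ := pow_unbounded_of_one_lt ((R₂ - d) / (R₁ - d)) E.one_lt_lam
  refine ⟨n₀, mapsTo_Jacn_cone E τ hd hR₂ ?_⟩
  rw [div_lt_iff₀ (sub_pos.2 hR₁)] at hn₀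
  rw [div_le_iff₀ (pow_pos E.lam_pos n₀)]
  linarith

end Cones

theorem exists_isUnitVec_smul {v : Fin 2 → ℝ} (hv : v ≠ 0) : ∃ t : ℝ, IsUnitVec (t • v) := by
  have hpos : 0 < v 0 ^ 2 + v 1 ^ 2 := by
    by_contra! h
    refine hv (funext fun i => ?_)
    fin_cases i <;> simp <;> nlinarith [sq_nonneg (v 0), sq_nonneg (v 1)]
  refine ⟨(Real.sqrt (v 0 ^ 2 + v 1 ^ 2))⁻¹, ?_⟩
  simp only [IsUnitVec, Pi.smul_apply, smul_eq_mul, mul_pow, ← mul_add, inv_pow,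
    Real.sq_sqrt hpos.le]
  exact inv_mul_cancel₀ hpos.ne'

section Counting

open Matrix

variable (E : ExpMap r ℓ) {s : ℕ∞} (τ : CrFun s)

def coneFiber (R : ℝ) (n : ℕ) (z : 𝕊 × 𝕊) (v : Fin 2 → ℝ) : Set (𝕊 × 𝕊) :=
  {ζ | (skew E τ)^[n] ζ = z ∧ v ∈ (Jacn E τ n ζ).mulVec '' E.cone R}

variable {E τ} {R : ℝ} {n : ℕ} {z : 𝕊 × 𝕊} {v : Fin 2 → ℝ}

theorem coneFiber_subset : coneFiber E τ R n z v ⊆ (skew E τ)^[n] ⁻¹' {z} := fun _ h => h.1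

theorem coneFiber_finite : (coneFiber E τ R n z v).Finite :=
  (finite_and_ncard_skew_iterate_preimage_le E τ n z).1.subset coneFiber_subset

theorem ncard_coneFiber_le_pow : ((coneFiber E τ R n z v).ncard : ℝ) ≤ ℓ ^ n :=
  le_trans (Nat.cast_le.2 (ncard_le_ncard coneFiber_subset
    (finite_and_ncard_skew_iterate_preimage_le E τ n z).1))
    (finite_and_ncard_skew_iterate_preimage_le E τ n z).2

theorem coneFiber_subset_smul (t : ℝ) : coneFiber E τ R n z v ⊆ coneFiber E τ R n z (t • v) := by
  rintro ζ ⟨hζ, w, hw, rfl⟩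
  exact ⟨hζ, t • w, smul_mem_slopeCone t hw, mulVec_smul _ t w⟩

theorem nQ_le {B : ℝ} (h : ∀ z v, IsUnitVec v → ((coneFiber E τ R n z v).ncard : ℝ) ≤ B) :
    nQ E τ R n ≤ B :=
  csSup_le ⟨_, 0, ![1, 0], by simp [IsUnitVec], rfl⟩ (by rintro _ ⟨z, v, hv, rfl⟩; exact h z v hv)

theorem ncard_coneFiber_le_nQ (hv : v ≠ 0) : ((coneFiber E τ R n z v).ncard : ℝ) ≤ nQ E τ R n := by
  obtain ⟨t, ht⟩ := exists_isUnitVec_smul hv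
  have hbdd : BddAbove {c : ℝ | ∃ z v, IsUnitVec v ∧ c = ((coneFiber E τ R n z v).ncard : ℝ)} :=
    ⟨ℓ ^ n, by rintro _ ⟨z, v, -, rfl⟩; exact ncard_coneFiber_le_pow⟩
  exact le_trans (Nat.cast_le.2 (ncard_le_ncard (coneFiber_subset_smul t) coneFiber_finite))
    (le_csSup hbdd ⟨z, t • v, ht, rfl⟩)

variable (E τ)

theorem one_le_nQ (hR : 0 ≤ R) (n : ℕ) : 1 ≤ nQ E τ R n := by
  have he : (![1, 0] : Fin 2 → ℝ) ∈ E.cone R := by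
    simpa [ExpMap.cone] using div_nonneg hR (sub_pos.2 E.one_lt_lam).le
  have hv : Jacn E τ n 0 *ᵥ ![1, 0] ≠ 0 := fun h => by
    have := mulVec_injective_iff_isUnit.2 (isUnit_Jacn E τ n 0) (h.trans (mulVec_zero _).symm)
    simp at this
  have hmem : (0 : 𝕊 × 𝕊) ∈ coneFiber E τ R n ((skew E τ)^[n] 0) (Jacn E τ n 0 *ᵥ ![1, 0]) :=
    ⟨rfl, _, he, rfl⟩
  exact le_trans (by exact_mod_cast (ncard_pos coneFiber_finite).2 ⟨_, hmem⟩)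
    (ncard_coneFiber_le_nQ hv)

variable {E τ}

theorem mapsTo_iterate_coneFiber {R' : ℝ} {a b : ℕ}
    (h : ∀ ζ, MapsTo (Jacn E τ a ζ *ᵥ ·) (E.cone R) (E.cone R')) :
    MapsTo (skew E τ)^[a] (coneFiber E τ R (a + b) z v) (coneFiber E τ R' b z v) := by
  rintro ζ ⟨hζ, w, hw, rfl⟩
  refine ⟨by rwa [← Function.iterate_add_apply, add_comm], Jacn E τ a ζ *ᵥ w, h ζ hw, ?_⟩
  rw [Jacn_add, mulVec_mulVec]

variable (E τ) {d : ℝ}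

theorem nQ_add_le_mul (hd : ∀ x : 𝕊, |deriv τ.toFun (rep x)| ≤ d) (hR : d ≤ R) (a b : ℕ) :
    nQ E τ R (a + b) ≤ nQ E τ R a * nQ E τ R b := by
  have hR0 : 0 ≤ R := (abs_nonneg _).trans ((hd 0).trans hR)
  refine nQ_le fun z v hv => ?_
  have hv0 : v ≠ 0 := by rintro rfl; simp [IsUnitVec] at hv
  have hfiber : ∀ ζ' ∈ coneFiber E τ R b z v,
      (({ζ ∈ coneFiber E τ R (a + b) z v | (skew E τ)^[a] ζ = ζ'}.ncard : ℕ) : ℝ) ≤ nQ E τ R a := by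
    intro ζ' _
    have hJ := isUnit_Jacn E τ b ζ'
    obtain ⟨w, hw⟩ := mulVec_surjective_iff_isUnit.2 hJ v
    have hw0 : w ≠ 0 := by rintro rfl; exact hv0 (by rw [← hw, mulVec_zero])
    refine le_trans (Nat.cast_le.2 (ncard_le_ncard ?_ coneFiber_finite))
      (ncard_coneFiber_le_nQ (z := ζ') hw0)
    rintro ζ ⟨⟨hζ, u, hu, hJu⟩, rfl⟩
    refine ⟨rfl, u, hu, mulVec_injective_iff_isUnit.2 hJ ?_⟩
    rw [mulVec_mulVec, ← Jacn_add, hJu, hw]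
  calc ((coneFiber E τ R (a + b) z v).ncard : ℝ)
      ≤ (coneFiber E τ R b z v).ncard * nQ E τ R a :=
        ncard_le_ncard_mul_of_mapsTo coneFiber_finite coneFiber_finite
          (mapsTo_iterate_coneFiber (mapsTo_Jacn_cone_self E τ hd hR a)) hfiber
    _ ≤ nQ E τ R b * nQ E τ R a :=
        mul_le_mul_of_nonneg_right (ncard_coneFiber_le_nQ hv0)
          (zero_le_one.trans (one_le_nQ E τ hR0 a))
    _ = nQ E τ R a * nQ E τ R b := mul_comm _ _

theorem exists_nQ_add_le_pow_mul (hd : ∀ x : 𝕊, |deriv τ.toFun (rep x)| ≤ d) {R₁ R₂ : ℝ}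
    (hR₁ : d < R₁) (hR₂ : 0 ≤ R₂) :
    ∃ n₀ : ℕ, ∀ n, nQ E τ R₂ (n₀ + n) ≤ (ℓ : ℝ) ^ n₀ * nQ E τ R₁ n := by
  obtain ⟨n₀, hn₀⟩ := exists_mapsTo_Jacn_cone E τ hd hR₁ hR₂
  refine ⟨n₀, fun n => nQ_le fun z v hv => ?_⟩
  have hv0 : v ≠ 0 := by rintro rfl; simp [IsUnitVec] at hv
  calc ((coneFiber E τ R₂ (n₀ + n) z v).ncard : ℝ)
      ≤ (coneFiber E τ R₁ n z v).ncard * (ℓ : ℝ) ^ n₀ :=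
        ncard_le_ncard_mul_of_mapsTo coneFiber_finite coneFiber_finite
          (mapsTo_iterate_coneFiber hn₀) fun ζ' _ =>
            le_trans (Nat.cast_le.2 (ncard_le_ncard (sep_subset_ofPred _ _)
              (finite_and_ncard_skew_iterate_preimage_le E τ n₀ ζ').1))
              (finite_and_ncard_skew_iterate_preimage_le E τ n₀ ζ').2
    _ ≤ nQ E τ R₁ n * (ℓ : ℝ) ^ n₀ := by gcongr; exact ncard_coneFiber_le_nQ hv0
    _ = (ℓ : ℝ) ^ n₀ * nQ E τ R₁ n := mul_comm _ _

end Counting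

def nRate (E : ExpMap r ℓ) {s : ℕ∞} (τ : CrFun s) (R : ℝ) : ℝ :=
  ⨅ k : ℕ, nQ E τ R (k + 1) ^ (((k : ℝ) + 1)⁻¹)

section Rate

variable (E : ExpMap r ℓ) {s : ℕ∞} (τ : CrFun s) {d : ℝ}

theorem tendsto_nQ_rpow_inv_nRate (hd : ∀ x : 𝕊, |deriv τ.toFun (rep x)| ≤ d) {R : ℝ}
    (hR : d ≤ R) : Tendsto (fun n : ℕ => nQ E τ R n ^ (n : ℝ)⁻¹) atTop (𝓝 (nRate E τ R)) :=
  tendsto_rpow_inv_iInf_of_submultiplicative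
    (one_le_nQ E τ ((abs_nonneg _).trans ((hd 0).trans hR))) (nQ_add_le_mul E τ hd hR)

theorem nRate_le_nRate (hd : ∀ x : 𝕊, |deriv τ.toFun (rep x)| ≤ d) {R₁ R₂ : ℝ} (hR₁ : d < R₁)
    (hR₂ : d ≤ R₂) : nRate E τ R₂ ≤ nRate E τ R₁ := by
  have hd0 : 0 ≤ d := (abs_nonneg _).trans (hd 0)
  obtain ⟨n₀, hn₀⟩ := exists_nQ_add_le_pow_mul E τ hd hR₁ (hd0.trans hR₂)
  exact le_of_tendsto_rpow_inv_of_le_mul_shift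
    (fun n => zero_le_one.trans (one_le_nQ E τ (hd0.trans hR₂) n))
    (one_le_nQ E τ (hd0.trans hR₁.le))
    (pow_pos (Nat.cast_pos.2 E.degree_pos) n₀) hn₀
    (tendsto_nQ_rpow_inv_nRate E τ hd hR₂) (tendsto_nQ_rpow_inv_nRate E τ hd hR₁.le)

theorem nRate_eq_nRate (hd : ∀ x : 𝕊, |deriv τ.toFun (rep x)| ≤ d) {R₁ R₂ : ℝ} (hR₁ : d < R₁)
    (hR₂ : d < R₂) : nRate E τ R₁ = nRate E τ R₂ :=
  le_antisymm (nRate_le_nRate E τ hd hR₂ hR₁.le) (nRate_le_nRate E τ hd hR₁ hR₂.le)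

end Rate

theorem stmt4_general (r ℓ : ℕ) (hr : 2 ≤ r) (E : ExpMap r ℓ) (τ : CrFun r) :
    (∀ R : ℝ, τ.dsup < R →
      Tendsto (fun n : ℕ => nQ E τ R n ^ ((n : ℝ)⁻¹)) atTop
        (𝓝 (⨅ k : ℕ, nQ E τ R (k + 1) ^ (((k : ℝ) + 1)⁻¹)))) ∧
    (∀ R₁ R₂ : ℝ, τ.dsup < R₁ → τ.dsup < R₂ →
      limUnder atTop (fun n : ℕ => nQ E τ R₁ n ^ ((n : ℝ)⁻¹)) =
        limUnder atTop (fun n : ℕ => nQ E τ R₂ n ^ ((n : ℝ)⁻¹))) ∧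
    (∀ ρ : ℝ, Real.exp ρ ≤ nlim E τ →
      ∀ R : ℝ, τ.dsup < R → ∀ n : ℕ, 1 ≤ n → Real.exp (ρ * n) ≤ nQ E τ R n) := by
  have hd := τ.abs_deriv_le_dsup (Nat.one_le_cast.2 (by omega))
  have hd0 : 0 ≤ τ.dsup := (abs_nonneg _).trans (hd 0)
  have hlimUnder : ∀ R, τ.dsup < R →
      limUnder atTop (fun n : ℕ => nQ E τ R n ^ ((n : ℝ)⁻¹)) = nRate E τ R := fun R hR =>
    (tendsto_nQ_rpow_inv_nRate E τ hd hR.le).limUnder_eq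
  refine ⟨fun R hR => tendsto_nQ_rpow_inv_nRate E τ hd hR.le, fun R₁ R₂ h₁ h₂ => ?_,
    fun ρ hρ R hR n hn => ?_⟩
  · rw [hlimUnder R₁ h₁, hlimUnder R₂ h₂, nRate_eq_nRate E τ hd h₁ h₂]
  · rw [nlim, hlimUnder _ (lt_add_one _), nRate_eq_nRate E τ hd (lt_add_one _) hR] at hρ
    rw [mul_comm, Real.exp_nat_mul]
    exact pow_le_of_le_iInf_rpow_inv
      (fun n => zero_le_one.trans (one_le_nQ E τ (hd0.trans hR.le) n)) (Real.exp_pos ρ).le hρ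
      (by omega)

/-- For every `R > ‖τ'‖_∞` the limit `lim_n 𝔫(τ,R;n)^{1/n}` exists and
equals `inf_{n ≥ 1} 𝔫(τ,R;n)^{1/n}`; the limit is independent of the choice of
`R > ‖τ'‖_∞`; and if the common value `𝔫(τ)` satisfies `𝔫(τ) ≥ e^ρ`, then
`𝔫(τ,R;n) ≥ e^{ρn}` for all `n ≥ 1`. -/
theorem stmt4 (r ℓ : ℕ) (hr : 2 ≤ r) (hl : 2 ≤ ℓ) (E : ExpMap r ℓ) (τ : CrFun r) :
    (∀ R : ℝ, τ.dsup < R →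
      Tendsto (fun n : ℕ => nQ E τ R n ^ ((n : ℝ)⁻¹)) atTop
        (𝓝 (⨅ k : ℕ, nQ E τ R (k + 1) ^ (((k : ℝ) + 1)⁻¹)))) ∧
    (∀ R₁ R₂ : ℝ, τ.dsup < R₁ → τ.dsup < R₂ →
      limUnder atTop (fun n : ℕ => nQ E τ R₁ n ^ ((n : ℝ)⁻¹)) =
        limUnder atTop (fun n : ℕ => nQ E τ R₂ n ^ ((n : ℝ)⁻¹))) ∧
    (∀ ρ : ℝ, Real.exp ρ ≤ nlim E τ →
      ∀ R : ℝ, τ.dsup < R → ∀ n : ℕ, 1 ≤ n → Real.exp (ρ * n) ≤ nQ E τ R n) :=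
  stmt4_general r ℓ hr E τ
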